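/- For A = (ξ₁ η₁; ξ₂ η₂) ∈ GL₂(ℝ) and ξ, η ∈ ℝ, define θ_{A,ξ,η} : H₃(ℝ) → H₃(ℝ) by θ_{A,ξ,η}(c(t₃)b(t₂)a(t₁)) := c(det A · t₃) · ( c((η₁η₂/2)t₂² + ηt₂) b(η₂t₂) a(η₁t₂) ) · ( c((ξ₁ξ₂/2)t₁² + ξt₁) b(ξ₂t₁) a(ξ₁t₁) ). Then: (i) each θ_{A,ξ,η} is a continuous group automorphism of H₃(ℝ); (ii) conversely, every continuous group automorphism of H₃(ℝ) equals θ_{A,ξ,η} for some A ∈ GL₂(ℝ) and ξ, η ∈ ℝ. -/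

import Mathlib

open MeasureTheory

/-- The real Heisenberg group `H₃(ℝ)`: `ℝ³` with
`(a,b,c)·(a′,b′,c′) = (a+a′, b+b′, c+c′+a·b′)`. -/
@[ext] structure H3 : Type where
  x : ℝ
  y : ℝ
  z : ℝ

namespace H3

instance : Mul H3 := ⟨fun g h => ⟨g.x + h.x, g.y + h.y, g.z + h.z + g.x * h.y⟩⟩
instance : One H3 := ⟨⟨0, 0, 0⟩⟩
instance : Inv H3 := ⟨fun g => ⟨-g.x, -g.y, -g.z + g.x * g.y⟩⟩

@[simp] lemma mul_x (g h : H3) : (g * h).x = g.x + h.x := rfl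
@[simp] lemma mul_y (g h : H3) : (g * h).y = g.y + h.y := rfl
@[simp] lemma mul_z (g h : H3) : (g * h).z = g.z + h.z + g.x * h.y := rfl
@[simp] lemma one_x : (1 : H3).x = 0 := rfl
@[simp] lemma one_y : (1 : H3).y = 0 := rfl
@[simp] lemma one_z : (1 : H3).z = 0 := rfl
@[simp] lemma inv_x (g : H3) : g⁻¹.x = -g.x := rfl
@[simp] lemma inv_y (g : H3) : g⁻¹.y = -g.y := rfl
@[simp] lemma inv_z (g : H3) : g⁻¹.z = -g.z + g.x * g.y := rfl

instance : Group H3 where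
  mul_assoc a b c := by ext <;> simp <;> ring
  one_mul a := by ext <;> simp
  mul_one a := by ext <;> simp
  inv_mul_cancel a := by ext <;> simp

/-- The Euclidean topology on `H₃(ℝ)`. -/
instance : TopologicalSpace H3 :=
  TopologicalSpace.induced (fun g => (g.x, g.y, g.z)) inferInstance

instance : MeasurableSpace H3 := borel H3

/-- `a(t)`. -/
def Ha (t : ℝ) : H3 := ⟨t, 0, 0⟩
/-- `b(t)`. -/
def Hb (t : ℝ) : H3 := ⟨0, t, 0⟩
/-- `c(t)`, the center. -/
def Hc (t : ℝ) : H3 := ⟨0, 0, t⟩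

/-- The projection `p : H₃(ℝ) → ℝ²`. -/
def pmap (g : H3) : ℝ × ℝ := (g.x, g.y)

/-- The kernel of `p`, i.e. the center of `H₃(ℝ)`, as a subgroup. -/
def pKer : Subgroup H3 where
  carrier := {g | g.x = 0 ∧ g.y = 0}
  one_mem' := ⟨rfl, rfl⟩
  mul_mem' := by
    rintro a b ⟨ha1, ha2⟩ ⟨hb1, hb2⟩
    exact ⟨by simp [ha1, hb1], by simp [ha2, hb2]⟩
  inv_mem' := by
    rintro a ⟨ha1, ha2⟩
    exact ⟨by simp [ha1], by simp [ha2]⟩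

/-- A lattice in `H₃(ℝ)`: a discrete subgroup with compact quotient. -/
def IsLattice (Γ : Subgroup H3) : Prop :=
  DiscreteTopology Γ ∧ CompactSpace (H3 ⧸ Γ)

/-- `k_Γ`: the index of the commutator subgroup `[Γ,Γ]` in `Γ ∩ ker p`. -/
noncomputable def kIdx (Γ : Subgroup H3) : ℕ :=
  Subgroup.relIndex ⁅Γ, Γ⁆ (Γ ⊓ pKer)

/-- The integer lattice `ℤ² ⊆ ℝ²`. -/
def intLattice : Set (ℝ × ℝ) := {v | ∃ m n : ℤ, v = ((m : ℝ), (n : ℝ))}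

/-- The action of a `2×2` matrix on `ℝ²`. -/
def matVec (A : Matrix (Fin 2) (Fin 2) ℝ) (v : ℝ × ℝ) : ℝ × ℝ :=
  (A 0 0 * v.1 + A 0 1 * v.2, A 1 0 * v.1 + A 1 1 * v.2)

/-- The dual of a subset of `ℝ²`:
all vectors pairing integrally with every element of `S`. -/
def dualSet (S : Set (ℝ × ℝ)) : Set (ℝ × ℝ) :=
  {v | ∀ w ∈ S, ∃ n : ℤ, v.1 * w.1 + v.2 * w.2 = (n : ℝ)}

end H3

namespace H3

/-- The embedding of `H3` into `ℝ³` defining the topology is continuous. -/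
lemma continuous_embed : Continuous (fun g : H3 => (g.x, g.y, g.z)) :=
  continuous_induced_dom

lemma continuous_x : Continuous H3.x := continuous_fst.comp continuous_embed
lemma continuous_y : Continuous H3.y :=
  (continuous_fst.comp continuous_snd).comp continuous_embed
lemma continuous_z : Continuous H3.z :=
  (continuous_snd.comp continuous_snd).comp continuous_embed

lemma continuous_mk {X : Type*} [TopologicalSpace X] {a b c : X → ℝ}
    (ha : Continuous a) (hb : Continuous b) (hc : Continuous c) :
    Continuous (fun t => (⟨a t, b t, c t⟩ : H3)) :=
  continuous_induced_rng.2 (by exact ha.prodMk (hb.prodMk hc))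

lemma continuous_Ha : Continuous Ha :=
  continuous_mk continuous_id continuous_const continuous_const
lemma continuous_Hb : Continuous Hb :=
  continuous_mk continuous_const continuous_id continuous_const
lemma continuous_Hc : Continuous Hc :=
  continuous_mk continuous_const continuous_const continuous_id

@[simp] lemma Ha_x (t : ℝ) : (Ha t).x = t := rfl
@[simp] lemma Ha_y (t : ℝ) : (Ha t).y = 0 := rfl
@[simp] lemma Ha_z (t : ℝ) : (Ha t).z = 0 := rfl
@[simp] lemma Hb_x (t : ℝ) : (Hb t).x = 0 := rfl
@[simp] lemma Hb_y (t : ℝ) : (Hb t).y = t := rfl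
@[simp] lemma Hb_z (t : ℝ) : (Hb t).z = 0 := rfl
@[simp] lemma Hc_x (t : ℝ) : (Hc t).x = 0 := rfl
@[simp] lemma Hc_y (t : ℝ) : (Hc t).y = 0 := rfl
@[simp] lemma Hc_z (t : ℝ) : (Hc t).z = t := rfl

/-- Every continuous additive map `ℝ → ℝ` is linear. -/
lemma linear_of_additive (phi : ℝ → ℝ) (hadd : ∀ s t, phi (s + t) = phi s + phi t)
    (hc : Continuous phi) (t : ℝ) : phi t = phi 1 * t := by
  let F : ℝ →+ ℝ := AddMonoidHom.mk' phi hadd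
  have hF : ∀ s, F.toRealLinearMap hc s = phi s := fun _ => rfl
  calc phi t = F.toRealLinearMap hc (t • (1:ℝ)) := by rw [hF]; norm_num
    _ = t • F.toRealLinearMap hc 1 := (F.toRealLinearMap hc).map_smul t 1
    _ = phi 1 * t := by rw [hF]; simp [mul_comm]

end H3


open H3

/-- The map `θ_{A,ξ,η}`, where `A = (ξ₁ η₁; ξ₂ η₂)`, i.e. `ξ₁ = A 0 0`, `η₁ = A 0 1`,
`ξ₂ = A 1 0`, `η₂ = A 1 1`:
`θ(c(t₃)b(t₂)a(t₁)) = c(det A·t₃)·(c((η₁η₂/2)t₂²+ηt₂)b(η₂t₂)a(η₁t₂))·(c((ξ₁ξ₂/2)t₁²+ξt₁)b(ξ₂t₁)a(ξ₁t₁))`. -/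
noncomputable def theta (A : Matrix (Fin 2) (Fin 2) ℝ) (ξ η : ℝ) (g : H3) : H3 :=
  Hc (A.det * g.z) *
    (Hc (A 0 1 * A 1 1 / 2 * g.y ^ 2 + η * g.y) * Hb (A 1 1 * g.y) * Ha (A 0 1 * g.y)) *
    (Hc (A 0 0 * A 1 0 / 2 * g.x ^ 2 + ξ * g.x) * Hb (A 1 0 * g.x) * Ha (A 0 0 * g.x))


lemma theta_def (A : Matrix (Fin 2) (Fin 2) ℝ) (ξ η : ℝ) (g : H3) :
    theta A ξ η g =
      ⟨A 0 0 * g.x + A 0 1 * g.y, A 1 0 * g.x + A 1 1 * g.y,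
        A.det * g.z + (A 0 1 * A 1 1 / 2 * g.y ^ 2 + η * g.y)
          + (A 0 0 * A 1 0 / 2 * g.x ^ 2 + ξ * g.x) + A 0 1 * g.y * (A 1 0 * g.x)⟩ := by
  ext <;> simp [theta] <;> ring

/-- Proposition 1.1: (i) each `θ_{A,ξ,η}` with `A ∈ GL₂(ℝ)` is a continuous group
automorphism of `H₃(ℝ)`; (ii) conversely every continuous group automorphism of
`H₃(ℝ)` is of the form `θ_{A,ξ,η}`. -/
theorem automorphisms_of_heisenberg :
    (∀ (A : Matrix (Fin 2) (Fin 2) ℝ) (ξ η : ℝ), A.det ≠ 0 →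
      Continuous (theta A ξ η) ∧
      (∀ g h : H3, theta A ξ η (g * h) = theta A ξ η g * theta A ξ η h) ∧
      Function.Bijective (theta A ξ η)) ∧
    (∀ f : H3 → H3, Continuous f → (∀ g h : H3, f (g * h) = f g * f h) →
      Function.Bijective f →
      ∃ (A : Matrix (Fin 2) (Fin 2) ℝ) (ξ η : ℝ), A.det ≠ 0 ∧ f = theta A ξ η) := by
  constructor
  · -- Part (i)
    intro A ξ η hA
    have hdet : A 0 0 * A 1 1 - A 0 1 * A 1 0 ≠ 0 := by
      rwa [Matrix.det_fin_two] at hA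
    refine ⟨?_, ?_, ?_, ?_⟩
    · -- continuity
      rw [show theta A ξ η = _ from funext (theta_def A ξ η)]
      refine continuous_mk ?_ ?_ ?_
      · exact (continuous_const.mul continuous_x).add (continuous_const.mul continuous_y)
      · exact (continuous_const.mul continuous_x).add (continuous_const.mul continuous_y)
      · refine (((continuous_const.mul continuous_z).add ?_).add ?_).add ?_
        · exact (continuous_const.mul (continuous_y.pow 2)).add
            (continuous_const.mul continuous_y)
        · exact (continuous_const.mul (continuous_x.pow 2)).add
            (continuous_const.mul continuous_x)
        · exact (continuous_const.mul continuous_y).mul (continuous_const.mul continuous_x)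
    · -- homomorphism
      intro g h
      simp only [theta_def, Matrix.det_fin_two]
      ext <;> simp <;> ring
    · -- injective
      intro g h he
      simp only [theta_def] at he
      have e1 : A 0 0 * g.x + A 0 1 * g.y = A 0 0 * h.x + A 0 1 * h.y :=
        congrArg H3.x he
      have e2 : A 1 0 * g.x + A 1 1 * g.y = A 1 0 * h.x + A 1 1 * h.y :=
        congrArg H3.y he
      have e3 := congrArg H3.z he
      simp only [Matrix.det_fin_two] at e3
      have hx : g.x = h.x := by
        have : (A 0 0 * A 1 1 - A 0 1 * A 1 0) * (g.x - h.x) = 0 := by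
          linear_combination A 1 1 * e1 - A 0 1 * e2
        have := mul_eq_zero.1 this
        rcases this with h' | h'
        · exact absurd h' hdet
        · linarith
      have hy : g.y = h.y := by
        have : (A 0 0 * A 1 1 - A 0 1 * A 1 0) * (g.y - h.y) = 0 := by
          linear_combination A 0 0 * e2 - A 1 0 * e1
        rcases mul_eq_zero.1 this with h' | h'
        · exact absurd h' hdet
        · linarith
      have hz : g.z = h.z := by
        have : (A 0 0 * A 1 1 - A 0 1 * A 1 0) * (g.z - h.z) = 0 := by
          rw [hx, hy] at e3; linear_combination e3
        rcases mul_eq_zero.1 this with h' | h'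
        · exact absurd h' hdet
        · linarith
      ext <;> assumption
    · -- surjective
      intro k
      set D := A 0 0 * A 1 1 - A 0 1 * A 1 0 with hD
      set x : ℝ := (A 1 1 * k.x - A 0 1 * k.y) / D with hxdef
      set y : ℝ := (A 0 0 * k.y - A 1 0 * k.x) / D with hydef
      refine ⟨⟨x, y, (k.z - ((A 0 1 * A 1 1 / 2 * y ^ 2 + η * y)
        + (A 0 0 * A 1 0 / 2 * x ^ 2 + ξ * x) + A 0 1 * y * (A 1 0 * x))) / D⟩, ?_⟩
      rw [theta_def]
      have hx' : A 0 0 * x + A 0 1 * y = k.x := by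
        rw [hxdef, hydef]; field_simp; ring
      have hy' : A 1 0 * x + A 1 1 * y = k.y := by
        rw [hxdef, hydef]; field_simp; ring
      ext
      · exact hx'
      · exact hy'
      · show A.det * _ + _ + _ + _ = k.z
        rw [Matrix.det_fin_two, ← hD]
        field_simp
        ring
  · -- Part (ii)
    intro f hf hmul hbij
    have hone : f 1 = 1 := by
      have h1 : f 1 * f 1 = f 1 * 1 := by rw [mul_one, ← hmul, one_mul]
      exact mul_left_cancel h1
    -- images of central elements are central
    have hcenter : ∀ t : ℝ, (f (Hc t)).x = 0 ∧ (f (Hc t)).y = 0 := by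
      intro t
      have hcomm : ∀ g : H3, f (Hc t) * g = g * f (Hc t) := by
        intro g
        obtain ⟨g', rfl⟩ := hbij.2 g
        rw [← hmul, ← hmul]
        congr 1
        ext <;> simp <;> ring
      constructor
      · have := congrArg H3.z (hcomm (Hb 1))
        simp at this
        linarith
      · have := congrArg H3.z (hcomm (Ha 1))
        simp at this
        linarith
    -- additive one-parameter subgroups
    have hHa_add : ∀ s t : ℝ, f (Ha (s + t)) = f (Ha s) * f (Ha t) := by
      intro s t; rw [← hmul]; congr 1; ext <;> simp
    have hHb_add : ∀ s t : ℝ, f (Hb (s + t)) = f (Hb s) * f (Hb t) := by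
      intro s t; rw [← hmul]; congr 1; ext <;> simp
    have hHc_add : ∀ s t : ℝ, f (Hc (s + t)) = f (Hc s) * f (Hc t) := by
      intro s t; rw [← hmul]; congr 1; ext <;> simp
    obtain ⟨ξ₁, hξ₁⟩ : ∃ r : ℝ, (f (Ha 1)).x = r := ⟨_, rfl⟩
    obtain ⟨ξ₂, hξ₂⟩ : ∃ r : ℝ, (f (Ha 1)).y = r := ⟨_, rfl⟩
    obtain ⟨η₁, hη₁⟩ : ∃ r : ℝ, (f (Hb 1)).x = r := ⟨_, rfl⟩
    obtain ⟨η₂, hη₂⟩ : ∃ r : ℝ, (f (Hb 1)).y = r := ⟨_, rfl⟩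
    obtain ⟨d, hd⟩ : ∃ r : ℝ, (f (Hc 1)).z = r := ⟨_, rfl⟩
    -- x and y components of the one-parameter subgroups are linear
    have hax : ∀ t, (f (Ha t)).x = ξ₁ * t := by
      intro t
      rw [← hξ₁]
      refine linear_of_additive (fun u => (f (Ha u)).x) (fun s t => ?_) (continuous_x.comp (hf.comp continuous_Ha)) t
      simp only [hHa_add, mul_x]
    have hay : ∀ t, (f (Ha t)).y = ξ₂ * t := by
      intro t
      rw [← hξ₂]
      refine linear_of_additive (fun u => (f (Ha u)).y) (fun s t => ?_) (continuous_y.comp (hf.comp continuous_Ha)) t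
      simp only [hHa_add, mul_y]
    have hbx : ∀ t, (f (Hb t)).x = η₁ * t := by
      intro t
      rw [← hη₁]
      refine linear_of_additive (fun u => (f (Hb u)).x) (fun s t => ?_) (continuous_x.comp (hf.comp continuous_Hb)) t
      simp only [hHb_add, mul_x]
    have hby : ∀ t, (f (Hb t)).y = η₂ * t := by
      intro t
      rw [← hη₂]
      refine linear_of_additive (fun u => (f (Hb u)).y) (fun s t => ?_) (continuous_y.comp (hf.comp continuous_Hb)) t
      simp only [hHb_add, mul_y]
    have hcz : ∀ t, (f (Hc t)).z = d * t := by
      intro t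
      rw [← hd]
      refine linear_of_additive (fun u => (f (Hc u)).z) (fun s t => ?_) (continuous_z.comp (hf.comp continuous_Hc)) t
      simp only [hHc_add, mul_z, (hcenter s).1, zero_mul, add_zero]
    -- z components, quadratic
    obtain ⟨ξ, hξ⟩ : ∃ r : ℝ, (f (Ha 1)).z - ξ₁ * ξ₂ / 2 = r := ⟨_, rfl⟩
    obtain ⟨η, hη⟩ : ∃ r : ℝ, (f (Hb 1)).z - η₁ * η₂ / 2 = r := ⟨_, rfl⟩
    have haz : ∀ t, (f (Ha t)).z = ξ₁ * ξ₂ / 2 * t ^ 2 + ξ * t := by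
      intro t
      have key := linear_of_additive (fun u => (f (Ha u)).z - ξ₁ * ξ₂ / 2 * u ^ 2)
        (fun s t => by simp only [hHa_add, mul_z, hax, hay]; ring)
        ((continuous_z.comp (hf.comp continuous_Ha)).sub
          (continuous_const.mul (continuous_pow 2))) t
      rw [← hξ]
      nlinarith [key]
    have hbz : ∀ t, (f (Hb t)).z = η₁ * η₂ / 2 * t ^ 2 + η * t := by
      intro t
      have key := linear_of_additive (fun u => (f (Hb u)).z - η₁ * η₂ / 2 * u ^ 2)
        (fun s t => by simp only [hHb_add, mul_z, hbx, hby]; ring)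
        ((continuous_z.comp (hf.comp continuous_Hb)).sub
          (continuous_const.mul (continuous_pow 2))) t
      rw [← hη]
      nlinarith [key]
    -- the determinant relation
    have hdet_rel : d = ξ₁ * η₂ - η₁ * ξ₂ := by
      have hrel : Ha 1 * Hb 1 = Hb 1 * Ha 1 * Hc 1 := by ext <;> simp
      have := congrArg H3.z (congrArg f hrel)
      rw [hmul, hmul, hmul] at this
      simp only [mul_z, mul_x] at this
      rw [hax 1, hay 1, hbx 1, hby 1, hcz 1, (hcenter 1).2] at this
      nlinarith [this]
    refine ⟨!![ξ₁, η₁; ξ₂, η₂], ξ, η, ?_, ?_⟩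
    · rw [Matrix.det_fin_two_of, ← hdet_rel]
      intro h0
      have hfc : f (Hc 1) = f 1 := by
        rw [hone]
        ext
        · exact (hcenter 1).1
        · exact (hcenter 1).2
        · rw [hcz 1, h0]; simp
      have := congrArg H3.z (hbij.1 hfc)
      simp at this
    · funext g
      have hdecomp : g = Hc g.z * Hb g.y * Ha g.x := by ext <;> simp
      rw [hdecomp, hmul, hmul, theta_def]
      have hAdet : (!![ξ₁, η₁; ξ₂, η₂] : Matrix (Fin 2) (Fin 2) ℝ).det = ξ₁ * η₂ - η₁ * ξ₂ :=
        Matrix.det_fin_two_of _ _ _ _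
      ext <;>
        simp [hax, hay, hbx, hby, haz, hbz, hcz, (hcenter g.z).1, (hcenter g.z).2,
          hAdet, hdet_rel, Matrix.cons_val_zero, Matrix.cons_val_one, Matrix.head_cons] <;>
        ring
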